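/- Let A(x,ẋ) = R(x) + L(x)ᵀ D(x,ẋ) L(x), where R(x) ⪰ 0, L : ℝ^m → ℝ^{n×m} is differentiable, D(x,ẋ) = diag(d_1(x,ẏ_1), …, d_n(x,ẏ_n)) with ẏ = L(x)ẋ, each d_i ≥ 0, and ẏ_i ∂_{ẏ_i} d_i(x,ẏ_i) ≥ 0 for all i. Then the curvature matrix Ξ_A(x,ẋ) = (1/2) Σ_{i=1}^m ẋ_i ∂_{ẋ} a_i(x,ẋ) satisfies Ξ_A(x,ẋ) = L(x)ᵀ Ξ_D(x,ẋ) L(x), where Ξ_D = (1/2)diag(ẏ_i ∂_{ẏ_i} d_i(x,ẏ_i)), and consequently Ξ_A(x,ẋ) ⪰ 0. -/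

import Mathlib

open Matrix

/-!
`R(x)` does not depend on `ẋ`, so it drops out of `Ξ_A`. With `y = L ẋ`, the `(j, i)` entry of
`Lᵀ D L` is `Σ_p L_pj d_p(y_p) L_pi`, and by the chain rule its `ẋ_k`-derivative is
`Σ_p L_pj d_p'(y_p) L_pk L_pi`. Contracting with `ẋ_i` reassembles `Σ_i L_pi ẋ_i = y_p`, which
gives `Ξ_A = Lᵀ Ξ_D L`: a congruence of a nonnegative diagonal matrix, hence positive semidefinite.
-/

/-- Partial derivative of a scalar function on `ℝ^m` in the `k`-th coordinate direction. -/
noncomputable def pd {m : ℕ} (k : Fin m) (f : (Fin m → ℝ) → ℝ) (x : Fin m → ℝ) : ℝ :=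
  fderiv ℝ f x (Pi.single k 1)

/-- `Ξ_A(x,ẋ) = (1/2) Σ_i ẋ_i ∂_ẋ a_i(x,ẋ)` for the velocity-dependent matrix `ẋ ↦ A(ẋ)`. -/
noncomputable def XiMat {m : ℕ} (A : (Fin m → ℝ) → Matrix (Fin m) (Fin m) ℝ)
    (v : Fin m → ℝ) : Matrix (Fin m) (Fin m) ℝ :=
  fun j k => (1 / 2) * ∑ i, v i * pd k (fun v' => A v' j i) v

section

variable {m n : ℕ}

lemma XiMat_const_add (C : Matrix (Fin m) (Fin m) ℝ) (A : (Fin m → ℝ) → Matrix (Fin m) (Fin m) ℝ)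
    (v : Fin m → ℝ) : XiMat (fun v' => C + A v') v = XiMat A v := by
  ext j k
  simp only [XiMat, pd, Matrix.add_apply, fderiv_const_add]

lemma transpose_mul_diagonal_mul_apply {ι κ α : Type*} [Fintype κ] [DecidableEq κ]
    [NonUnitalNonAssocSemiring α] (L : Matrix κ ι α) (c : κ → α) (j i : ι) :
    (Lᵀ * diagonal c * L) j i = ∑ p, L p j * c p * L p i := by
  simp [mul_apply, diagonal_apply]

lemma pd_comp_mulVec_apply (L : Matrix (Fin n) (Fin m) ℝ) (g : ℝ → ℝ) (p : Fin n) (k : Fin m)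
    (v : Fin m → ℝ) (hg : DifferentiableAt ℝ g ((L *ᵥ v) p)) :
    pd k (fun v' => g ((L *ᵥ v') p)) v = deriv g ((L *ᵥ v) p) * L p k := by
  let row : (Fin m → ℝ) →L[ℝ] ℝ :=
    LinearMap.toContinuousLinearMap ((LinearMap.proj p).comp (mulVecLin L))
  have hrow : row (Pi.single k 1) = L p k := by simp [row]
  have hchain : HasFDerivAt (fun v' => g ((L *ᵥ v') p)) (deriv g ((L *ᵥ v) p) • row) v :=
    hg.hasDerivAt.comp_hasFDerivAt v row.hasFDerivAt
  rw [pd, hchain.fderiv, _root_.smul_apply, hrow, smul_eq_mul]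

lemma pd_transpose_mul_diagonal_mul_apply (L : Matrix (Fin n) (Fin m) ℝ) (g : Fin n → ℝ → ℝ)
    (v : Fin m → ℝ) (hg : ∀ p, DifferentiableAt ℝ (g p) ((L *ᵥ v) p)) (j k i : Fin m) :
    pd k (fun v' => (Lᵀ * diagonal (fun p => g p ((L *ᵥ v') p)) * L) j i) v
      = ∑ p, L p j * (deriv (g p) ((L *ᵥ v) p) * L p k) * L p i := by
  have hdiff : ∀ p, DifferentiableAt ℝ (fun v' => g p ((L *ᵥ v') p)) v := fun p =>
    (hg p).comp v (by simp only [mulVec, dotProduct]; fun_prop)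
  simp_rw [transpose_mul_diagonal_mul_apply]
  rw [pd, fderiv_fun_sum fun p _ => ((hdiff p).const_mul _).mul_const _]
  simp only [_root_.sum_apply, fderiv_mul_const ((hdiff _).const_mul _),
    fderiv_const_mul (hdiff _)]
  refine Finset.sum_congr rfl fun p _ => ?_
  rw [_root_.smul_apply, _root_.smul_apply, ← pd, pd_comp_mulVec_apply L (g p) p k v (hg p),
    smul_eq_mul, smul_eq_mul]
  ring

lemma XiMat_transpose_mul_diagonal_mul (L : Matrix (Fin n) (Fin m) ℝ) (g : Fin n → ℝ → ℝ)
    (v : Fin m → ℝ) (hg : ∀ p, DifferentiableAt ℝ (g p) ((L *ᵥ v) p)) :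
    XiMat (fun v' => Lᵀ * diagonal (fun p => g p ((L *ᵥ v') p)) * L) v
      = Lᵀ * diagonal (fun p => (1 / 2) * ((L *ᵥ v) p * deriv (g p) ((L *ᵥ v) p))) * L := by
  ext j k
  simp only [XiMat, pd_transpose_mul_diagonal_mul_apply L g v hg]
  rw [transpose_mul_diagonal_mul_apply]
  simp only [mulVec, dotProduct, Finset.mul_sum, Finset.sum_mul]
  rw [Finset.sum_comm]
  refine Finset.sum_congr rfl fun p _ => Finset.sum_congr rfl fun i _ => ?_
  ring

end

theorem Xi_of_structured_metric_general {m n : ℕ}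
    (R : (Fin m → ℝ) → Matrix (Fin m) (Fin m) ℝ)
    (L : (Fin m → ℝ) → Matrix (Fin n) (Fin m) ℝ)
    (d : Fin n → (Fin m → ℝ) → ℝ → ℝ)
    (hd : ∀ i x, Differentiable ℝ (d i x))
    (hdmono : ∀ i x t, 0 ≤ t * deriv (d i x) t)
    (x v : Fin m → ℝ) :
    XiMat (fun v' => R x + (L x)ᵀ *
        Matrix.diagonal (fun i => d i x ((L x).mulVec v' i)) * L x) v
      = (L x)ᵀ *
          Matrix.diagonal (fun i =>
            (1 / 2) * ((L x).mulVec v i * deriv (d i x) ((L x).mulVec v i))) * L x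
    ∧ (XiMat (fun v' => R x + (L x)ᵀ *
        Matrix.diagonal (fun i => d i x ((L x).mulVec v' i)) * L x) v).PosSemidef := by
  have hXi := (XiMat_const_add (R x) _ v).trans
    (XiMat_transpose_mul_diagonal_mul (L x) (fun i => d i x) v fun i => (hd i x).differentiableAt)
  refine ⟨hXi, hXi ▸ ?_⟩
  have hdiag := posSemidef_diagonal_iff.mpr fun i =>
    mul_nonneg one_half_pos.le (hdmono i x ((L x).mulVec v i))
  simpa only [conjTranspose_eq_transpose_of_trivial] using hdiag.conjTranspose_mul_mul_same (L x)

/-- For `A(x,ẋ) = R(x) + L(x)ᵀ D(x,ẋ) L(x)` with `D = diag(d_i(x, ẏ_i))`, `ẏ = L(x)ẋ`,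
`d_i ≥ 0` and `ẏ_i ∂_{ẏ_i} d_i ≥ 0`, the curvature matrix satisfies
`Ξ_A = Lᵀ Ξ_D L` with `Ξ_D = (1/2)diag(ẏ_i ∂_{ẏ_i} d_i)`, and `Ξ_A ⪰ 0`. -/
theorem Xi_of_structured_metric {m n : ℕ}
    (R : (Fin m → ℝ) → Matrix (Fin m) (Fin m) ℝ)
    (L : (Fin m → ℝ) → Matrix (Fin n) (Fin m) ℝ)
    (d : Fin n → (Fin m → ℝ) → ℝ → ℝ)
    (hR : ∀ x, (R x).PosSemidef)
    (hL : ∀ i j, Differentiable ℝ fun x => L x i j)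
    (hd : ∀ i x, Differentiable ℝ (d i x))
    (hd0 : ∀ i x t, 0 ≤ d i x t)
    (hdmono : ∀ i x t, 0 ≤ t * deriv (d i x) t)
    (x v : Fin m → ℝ) :
    XiMat (fun v' => R x + (L x)ᵀ *
        Matrix.diagonal (fun i => d i x ((L x).mulVec v' i)) * L x) v
      = (L x)ᵀ *
          Matrix.diagonal (fun i =>
            (1 / 2) * ((L x).mulVec v i * deriv (d i x) ((L x).mulVec v i))) * L x
    ∧ (XiMat (fun v' => R x + (L x)ᵀ *
        Matrix.diagonal (fun i => d i x ((L x).mulVec v' i)) * L x) v).PosSemidef :=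
  Xi_of_structured_metric_general R L d hd hdmono x v
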